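/- Let p ≥ 5 be a prime and let N be a normal subgroup of SL₂(F_p) containing an element of order p. Then N = SL₂(F_p). -/

import Mathlib

/-! PSL₂(F_p) is simple for p ≥ 5 and SL₂(F_p) is perfect. Hence a normal subgroup N either has
trivial image in PSL₂(F_p), i.e. lies in the centre, or together with the centre generates
SL₂(F_p); in the latter case SL₂(F_p)/N is a quotient of the centre, so it is abelian and, by
perfectness, trivial. Central elements of SL₂ are scalars ±1 and square to 1, so they cannot have
order p. -/

open Matrix
open scoped commutatorElement

theorem Subgroup.Normal.le_center_or_eq_top {G : Type*} [Group G]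
    [IsSimpleGroup (G ⧸ center G)] (hG : _root_.commutator G = ⊤)
    {N : Subgroup G} (hN : N.Normal) : N ≤ center G ∨ N = ⊤ := by
  have hNZ := hN.map (QuotientGroup.mk' (center G)) (QuotientGroup.mk'_surjective _)
  refine (IsSimpleGroup.eq_bot_or_eq_top_of_normal _ hNZ).imp
    (fun h ↦ by simpa using (map_eq_bot_iff _).mp h) (fun h ↦ ?_)
  have hsup : N ⊔ center G = ⊤ := by
    simpa [h] using (comap_map_eq (QuotientGroup.mk' (center G)) N).symm
  rw [eq_top_iff, ← hG, _root_.commutator_def, ← hsup, commutator_le]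
  rintro _ hg h -
  obtain ⟨n, hn, z, hz, rfl⟩ := mem_sup_of_normal_left.mp hg
  have hcomm : ⁅n * z, h⁆ = ⁅n, h⁆ := by
    rw [commutatorElement_def, commutatorElement_def, mul_assoc n z h, ← mem_center_iff.mp hz h]
    group
  rw [hcomm]
  exact commutator_le_left N ⊤ (commutator_mem_commutator hn (mem_top h))

theorem Matrix.SpecialLinearGroup.pow_card_eq_one_of_mem_center {n R : Type*} [Fintype n]
    [DecidableEq n] [CommRing R] {g : SpecialLinearGroup n R}
    (hg : g ∈ Subgroup.center (SpecialLinearGroup n R)) : g ^ Fintype.card n = 1 := by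
  obtain ⟨r, hr, hrg⟩ := mem_center_iff.mp hg
  ext1
  rw [coe_pow, ← hrg, ← map_pow, hr, map_one, coe_one]

theorem exists_ne_zero_sq_ne_one_of_four_le_card {F : Type*} [Field F] [Fintype F]
    (hF : 4 ≤ Fintype.card F) : ∃ a : F, a ≠ 0 ∧ a ^ 2 ≠ 1 := by
  classical
  obtain ⟨a, -, ha⟩ := Finset.exists_mem_notMem_of_card_lt_card
    (s := ({0, 1, -1} : Finset F)) (t := Finset.univ)
    (by grw [Finset.card_le_three, Finset.card_univ]; omega)
  simp only [Finset.mem_insert, Finset.mem_singleton, not_or] at ha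
  exact ⟨a, ha.1, fun h ↦ (sq_eq_one_iff.mp h).elim ha.2.1 ha.2.2⟩

/-- For a prime `p ≥ 5`, a normal subgroup of `SL₂(F_p)` containing an element
of order `p` is the whole of `SL₂(F_p)`. -/
theorem stmt10 (p : ℕ) (hp : p.Prime) (hp5 : 5 ≤ p)
    (N : Subgroup (Matrix.SpecialLinearGroup (Fin 2) (ZMod p))) (hN : N.Normal)
    (hx : ∃ x ∈ N, orderOf x = p) :
    N = ⊤ := by
  have : Fact p.Prime := ⟨hp⟩
  obtain ⟨a, ha, ha2⟩ :=
    exists_ne_zero_sq_ne_one_of_four_le_card (F := ZMod p) (by rw [ZMod.card]; omega)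
  have := ProjectiveSpecialLinearGroup.rank_two_simple' ⟨a, ha, ha2⟩
  refine (hN.le_center_or_eq_top (SL2.commutator_eq_top ha ha2)).resolve_left fun hcenter ↦ ?_
  obtain ⟨x, hxN, hxp⟩ := hx
  have hsq : x ^ 2 = 1 := SpecialLinearGroup.pow_card_eq_one_of_mem_center (hcenter hxN)
  have hp2 : p ∣ 2 := hxp ▸ orderOf_dvd_of_pow_eq_one hsq
  exact absurd (Nat.le_of_dvd two_pos hp2) (by omega)
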